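/- arXiv:1501.01617 — 3 statements merged into one kernel-verified Lean document; each statement's English description precedes it below -/
import Mathlib

section
/- Let u, v be nonzero vectors in ℝ^d and let c = λu + (1−λ)v for some λ ∈ [0,1] with c ≠ 0. Then the angle between c and v is at most the angle between u and v; equivalently, ⟪c, v⟫/(‖c‖‖v‖) ≥ ⟪u, v⟫/(‖u‖‖v‖). -/
/-!
Since `c` lies on the segment `[u, v]`, the ray through `c` splits the angle between `u` and `v`:
`∠(u, c) + ∠(c, v) = ∠(u, v)`. Hence `∠(c, v) ≤ ∠(u, v)`, and cosine is antitone on `[0, π]`.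
-/

open InnerProductGeometry

theorem InnerProductGeometry.angle_le_angle_of_mem_segment {V : Type*} [NormedAddCommGroup V]
    [InnerProductSpace ℝ V] {u v c : V} (hu : u ≠ 0) (hv : v ≠ 0) (hc : c ∈ segment ℝ u v) :
    angle c v ≤ angle u v := by
  have hsplit : EuclideanGeometry.angle u 0 c + EuclideanGeometry.angle c 0 v =
      EuclideanGeometry.angle u 0 v :=
    EuclideanGeometry.angle_add_of_ne_of_ne hu.symm hv.symm (mem_segment_iff_wbtw.mp hc)
  simp only [EuclideanGeometry.angle, vsub_eq_sub, sub_zero] at hsplit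
  linarith [angle_nonneg u c]

theorem convex_combination_angle_general (d : ℕ) (u v c : EuclideanSpace ℝ (Fin d))
    (hu : u ≠ 0) (hv : v ≠ 0)
    (lam : ℝ) (hlam0 : 0 ≤ lam) (hlam1 : lam ≤ 1)
    (hcdef : c = lam • u + (1 - lam) • v) :
    inner ℝ u v / (‖u‖ * ‖v‖) ≤ (inner ℝ c v : ℝ) / (‖c‖ * ‖v‖) := by
  have hc : c ∈ segment ℝ u v := ⟨lam, 1 - lam, hlam0, by linarith, by ring, hcdef.symm⟩
  rw [← cos_angle, ← cos_angle]
  exact Real.cos_le_cos_of_nonneg_of_le_pi (angle_nonneg c v) (angle_le_pi u v)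
    (angle_le_angle_of_mem_segment hu hv hc)

theorem convex_combination_angle (d : ℕ) (u v c : EuclideanSpace ℝ (Fin d))
    (hu : u ≠ 0) (hv : v ≠ 0) (hc : c ≠ 0)
    (lam : ℝ) (hlam0 : 0 ≤ lam) (hlam1 : lam ≤ 1)
    (hcdef : c = lam • u + (1 - lam) • v) :
    inner ℝ u v / (‖u‖ * ‖v‖) ≤ (inner ℝ c v : ℝ) / (‖c‖ * ‖v‖) :=
  convex_combination_angle_general d u v c hu hv lam hlam0 hlam1 hcdef
end

section
/- Let u, v be nonzero vectors in ℝ^d and c = λu + (1−λ)v, λ ∈ [0,1], c ≠ 0. Then ‖c/‖c‖ − v/‖v‖‖ ≤ ‖u/‖u‖ − v/‖v‖‖. -/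
/-!
Writing `a = u / ‖u‖` and `b = v / ‖v‖`, the point `c` is a nonnegative combination `α a + β b`
of two unit vectors. For unit vectors `‖x - b‖² = 2 - 2 ⟪x, b⟫`, so it suffices that the cosine
`⟪c, b⟫ / ‖c‖` is at least `t = ⟪a, b⟫`. If `t ≥ 0` this follows from `‖c‖ ≤ α + β` and
`t ≤ 1`; if `t < 0`, from `‖c‖ ≥ ⟪c, a⟫ = α + β t` and `t² ≤ 1`.
-/

open RealInnerProductSpace

variable {E : Type*} [NormedAddCommGroup E] [InnerProductSpace ℝ E]

theorem norm_sub_sq_eq_two_sub_inner_of_norm_eq_one {x y : E} (hx : ‖x‖ = 1) (hy : ‖y‖ = 1) :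
    ‖x - y‖ ^ 2 = 2 - 2 * ⟪x, y⟫ := by
  rw [norm_sub_sq_real, hx, hy]
  ring

theorem norm_sub_le_norm_sub_of_inner_le {x y b : E} (hx : ‖x‖ = 1) (hy : ‖y‖ = 1)
    (hb : ‖b‖ = 1) (h : ⟪y, b⟫ ≤ ⟪x, b⟫) : ‖x - b‖ ≤ ‖y - b‖ := by
  refine (pow_le_pow_iff_left₀ (norm_nonneg _) (norm_nonneg _) two_ne_zero).mp ?_
  rw [norm_sub_sq_eq_two_sub_inner_of_norm_eq_one hx hb,
    norm_sub_sq_eq_two_sub_inner_of_norm_eq_one hy hb]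
  linarith

theorem inner_mul_norm_le_inner_smul_add_smul {a b : E} (ha : ‖a‖ = 1) (hb : ‖b‖ = 1)
    {α β : ℝ} (hα : 0 ≤ α) (hβ : 0 ≤ β) :
    ⟪a, b⟫ * ‖α • a + β • b‖ ≤ ⟪α • a + β • b, b⟫ := by
  set t := ⟪a, b⟫
  have hinner : ⟪α • a + β • b, b⟫ = α * t + β := by
    rw [inner_add_left, real_inner_smul_left, real_inner_smul_left,
      real_inner_self_eq_norm_sq, hb, one_pow, mul_one]
  have ht : |t| ≤ 1 := by simpa [ha, hb] using abs_real_inner_le_norm a b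
  have ht_sq : t ^ 2 ≤ 1 := by nlinarith [abs_nonneg t, sq_abs t]
  rw [hinner]
  rcases le_or_gt 0 t with ht0 | ht0
  · have hnorm : ‖α • a + β • b‖ ≤ α + β := by
      simpa [norm_smul, abs_of_nonneg hα, abs_of_nonneg hβ, ha, hb]
        using norm_add_le (α • a) (β • b)
    nlinarith [abs_le.mp ht]
  · have hnorm : α + β * t ≤ ‖α • a + β • b‖ := by
      have := real_inner_le_norm (α • a + β • b) a
      rwa [ha, mul_one, inner_add_left, real_inner_smul_left, real_inner_smul_left,
        real_inner_self_eq_norm_sq, ha, one_pow, mul_one, real_inner_comm] at this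
    nlinarith

theorem norm_normalize_smul_add_smul_sub_le {a b : E} (ha : ‖a‖ = 1) (hb : ‖b‖ = 1)
    {α β : ℝ} (hα : 0 ≤ α) (hβ : 0 ≤ β) (hc : α • a + β • b ≠ 0) :
    ‖‖α • a + β • b‖⁻¹ • (α • a + β • b) - b‖ ≤ ‖a - b‖ := by
  refine norm_sub_le_norm_sub_of_inner_le (norm_smul_inv_norm hc) ha hb ?_
  rw [real_inner_smul_left, ← div_eq_inv_mul, le_div_iff₀ (norm_pos_iff.mpr hc)]
  exact inner_mul_norm_le_inner_smul_add_smul ha hb hα hβ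

theorem convex_combination_normalized_closer (d : ℕ)
    (u v c : EuclideanSpace ℝ (Fin d))
    (hu : u ≠ 0) (hv : v ≠ 0) (hc : c ≠ 0)
    (lam : ℝ) (hlam0 : 0 ≤ lam) (hlam1 : lam ≤ 1)
    (hcdef : c = lam • u + (1 - lam) • v) :
    ‖‖c‖⁻¹ • c - ‖v‖⁻¹ • v‖ ≤ ‖‖u‖⁻¹ • u - ‖v‖⁻¹ • v‖ := by
  have hc' : c = (lam * ‖u‖) • (‖u‖⁻¹ • u) + ((1 - lam) * ‖v‖) • (‖v‖⁻¹ • v) := by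
    rw [hcdef, smul_smul, smul_smul, mul_assoc, mul_assoc,
      mul_inv_cancel₀ (norm_ne_zero_iff.mpr hu), mul_inv_cancel₀ (norm_ne_zero_iff.mpr hv),
      mul_one, mul_one]
  rw [hc'] at hc ⊢
  exact norm_normalize_smul_add_smul_sub_le (norm_smul_inv_norm hu) (norm_smul_inv_norm hv)
    (by positivity) (mul_nonneg (sub_nonneg.mpr hlam1) (norm_nonneg v)) hc
end

section
/- Combining the previous two facts: for nonzero u, v ∈ ℝ^d and c = λu + (1−λ)v nonzero with λ ∈ [0,1], one has ‖c/‖c‖ − v/‖v‖‖ ≤ (2/‖v‖)·‖u − v‖. -/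
/-!
With `ĉ = ‖c‖⁻¹ • c` we have `c = ‖c‖ • ĉ` and `‖ĉ‖ ≤ 1`, even for `c = 0`. Hence
`‖v‖ • (ĉ - v̂) = (c - v) + (‖v‖ - ‖c‖) • ĉ`, and both terms have norm at most `‖c - v‖`.
Finally `c` lies on the segment from `v` to `u`, so `‖c - v‖ ≤ ‖u - v‖`.
-/

namespace NormedSpace

variable {V : Type*} [NormedAddCommGroup V] [NormedSpace ℝ V]

theorem norm_normalize_le_one (x : V) : ‖normalize x‖ ≤ 1 := by
  rw [normalize, norm_smul, norm_inv, norm_norm]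
  exact inv_mul_le_one_of_le₀ le_rfl (norm_nonneg x)

theorem norm_normalize_sub_normalize_le (x : V) {y : V} (hy : y ≠ 0) :
    ‖normalize x - normalize y‖ ≤ 2 / ‖y‖ * ‖x - y‖ := by
  have hy' : 0 < ‖y‖ := norm_pos_iff.mpr hy
  have hdecomp :
      ‖y‖ • (normalize x - normalize y) = (x - y) + (‖y‖ - ‖x‖) • normalize x := by
    rw [smul_sub, sub_smul, norm_smul_normalize, norm_smul_normalize]
    abel
  have hradial : ‖(‖y‖ - ‖x‖) • normalize x‖ ≤ ‖x - y‖ :=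
    calc ‖(‖y‖ - ‖x‖) • normalize x‖ = |‖x‖ - ‖y‖| * ‖normalize x‖ := by
          rw [norm_smul, Real.norm_eq_abs, abs_sub_comm]
      _ ≤ ‖x - y‖ * 1 :=
          mul_le_mul (abs_norm_sub_norm_le x y) (norm_normalize_le_one x) (norm_nonneg _)
            (norm_nonneg _)
      _ = ‖x - y‖ := mul_one _
  have hscaled : ‖y‖ * ‖normalize x - normalize y‖ ≤ 2 * ‖x - y‖ := by
    calc ‖y‖ * ‖normalize x - normalize y‖
        = ‖(x - y) + (‖y‖ - ‖x‖) • normalize x‖ := by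
          rw [← hdecomp, norm_smul, norm_norm]
      _ ≤ ‖x - y‖ + ‖(‖y‖ - ‖x‖) • normalize x‖ := norm_add_le _ _
      _ ≤ 2 * ‖x - y‖ := by linarith
  rw [div_mul_eq_mul_div, le_div_iff₀ hy', mul_comm]
  exact hscaled

end NormedSpace

theorem convex_combination_normalized_bound_general (d : ℕ)
    (u v c : EuclideanSpace ℝ (Fin d))
    (hv : v ≠ 0)
    (lam : ℝ) (hlam0 : 0 ≤ lam) (hlam1 : lam ≤ 1)
    (hcdef : c = lam • u + (1 - lam) • v) :
    ‖‖c‖⁻¹ • c - ‖v‖⁻¹ • v‖ ≤ (2 / ‖v‖) * ‖u - v‖ := by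
  have hc_mem : c ∈ segment ℝ v u :=
    ⟨1 - lam, lam, by linarith, hlam0, by ring, by rw [hcdef, add_comm]⟩
  calc ‖‖c‖⁻¹ • c - ‖v‖⁻¹ • v‖ ≤ 2 / ‖v‖ * ‖c - v‖ :=
        NormedSpace.norm_normalize_sub_normalize_le c hv
    _ ≤ 2 / ‖v‖ * ‖u - v‖ := by
        gcongr
        exact norm_sub_le_of_mem_segment hc_mem

theorem convex_combination_normalized_bound (d : ℕ)
    (u v c : EuclideanSpace ℝ (Fin d))
    (hu : u ≠ 0) (hv : v ≠ 0) (hc : c ≠ 0)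
    (lam : ℝ) (hlam0 : 0 ≤ lam) (hlam1 : lam ≤ 1)
    (hcdef : c = lam • u + (1 - lam) • v) :
    ‖‖c‖⁻¹ • c - ‖v‖⁻¹ • v‖ ≤ (2 / ‖v‖) * ‖u - v‖ :=
  convex_combination_normalized_bound_general d u v c hv lam hlam0 hlam1 hcdef
end
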